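/- arXiv:2602.06686 — 3 statements merged into one kernel-verified Lean document; each statement's English description precedes it below -/
import Mathlib

section
/- On the D2Q9 lattice with c_s² = c²/3, the antisymmetric subspace A ⊂ ℝ⁹ is exactly spanned by the four vectors e_{ix}, e_{iy}, ψᵢ^{(xxy)} = e_{iy}(e_{ix}² - c_s²), and ψᵢ^{(xyy)} = e_{ix}(e_{iy}² - c_s²); these four vectors are pairwise orthogonal under the weighted inner product ⟨f,g⟩_w = Σᵢ wᵢ f(i) g(i), with ⟨e_{·α}, e_{·α}⟩_w = c_s² (times density normalization Σᵢ wᵢ = 1) and ⟨ψ^{(xxy)}, ψ^{(xxy)}⟩_w = ⟨ψ^{(xyy)}, ψ^{(xyy)}⟩_w = 2c_s⁶. -/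
open Finset

set_option maxHeartbeats 1000000

/-- x-components of the D2Q9 velocities. -/
noncomputable def ex (c : ℝ) : Fin 9 → ℝ := ![0, c, 0, -c, 0, c, -c, -c, c]

/-- y-components of the D2Q9 velocities. -/
noncomputable def ey (c : ℝ) : Fin 9 → ℝ := ![0, 0, c, 0, -c, c, c, -c, -c]

/-- D2Q9 velocity components indexed by coordinate `α ∈ {x, y}`. -/
noncomputable def ev (c : ℝ) : Fin 2 → Fin 9 → ℝ := ![ex c, ey c]

/-- D2Q9 weights. -/
noncomputable def w9 : Fin 9 → ℝ := ![4/9, 1/9, 1/9, 1/9, 1/9, 1/36, 1/36, 1/36, 1/36]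

/-- Velocity inversion on D2Q9 indices: `e (bar9 i) = - e i`. -/
def bar9 : Fin 9 → Fin 9 := ![0, 3, 4, 1, 2, 7, 8, 5, 6]

/-- Squared sound speed. -/
noncomputable def cs2 (c : ℝ) : ℝ := c ^ 2 / 3

/-- Second-order Hermite polynomials `H⁽²⁾ᵢ,αβ = e_{iα} e_{iβ} - c_s² δ_{αβ}`. -/
noncomputable def H2 (c : ℝ) (α β : Fin 2) (i : Fin 9) : ℝ :=
  ev c α i * ev c β i - cs2 c * (if α = β then 1 else 0)

/-- Third-order Hermite polynomials. -/
noncomputable def H3 (c : ℝ) (α β γ : Fin 2) (i : Fin 9) : ℝ :=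
  ev c α i * ev c β i * ev c γ i -
    cs2 c * (ev c α i * (if β = γ then 1 else 0) + ev c β i * (if γ = α then 1 else 0) +
      ev c γ i * (if α = β then 1 else 0))

/-- The D2Q9 ghost mode `φᵢ = (e_{ix}² - c_s²)(e_{iy}² - c_s²)`. -/
noncomputable def ghost (c : ℝ) (i : Fin 9) : ℝ :=
  (ex c i ^ 2 - cs2 c) * (ey c i ^ 2 - cs2 c)

/-- The symmetric subspace of `ℝ⁹` under velocity inversion. -/
def S9 : Submodule ℝ (Fin 9 → ℝ) where
  carrier := {f | ∀ i, f (bar9 i) = f i}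
  add_mem' := by intro a b ha hb i; simp [ha i, hb i]
  zero_mem' := by intro i; simp
  smul_mem' := by intro r a ha i; simp [ha i]

/-- The antisymmetric subspace of `ℝ⁹` under velocity inversion. -/
def A9 : Submodule ℝ (Fin 9 → ℝ) where
  carrier := {f | ∀ i, f (bar9 i) = -f i}
  add_mem' := by intro a b ha hb i; simp [ha i, hb i]; ring
  zero_mem' := by intro i; simp
  smul_mem' := by intro r a ha i; simp [ha i]

/-- The third-order mode `ψᵢ^{(xxy)} = e_{iy}(e_{ix}² - c_s²)`. -/
noncomputable def psiXXY (c : ℝ) (i : Fin 9) : ℝ := ey c i * (ex c i ^ 2 - cs2 c)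

/-- The third-order mode `ψᵢ^{(xyy)} = e_{ix}(e_{iy}² - c_s²)`. -/
noncomputable def psiXYY (c : ℝ) (i : Fin 9) : ℝ := ex c i * (ey c i ^ 2 - cs2 c)

/-- The four antisymmetric modes `e_x, e_y, ψ^{(xxy)}, ψ^{(xyy)}`. -/
noncomputable def antisymModes (c : ℝ) : Fin 4 → Fin 9 → ℝ :=
  ![ex c, ey c, psiXXY c, psiXYY c]


section auxEval
variable (c : ℝ)
lemma exv : ex c 0 = 0 ∧ ex c 1 = c ∧ ex c 2 = 0 ∧ ex c 3 = -c ∧ ex c 4 = 0 ∧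
    ex c 5 = c ∧ ex c 6 = -c ∧ ex c 7 = -c ∧ ex c 8 = c :=
  ⟨rfl, rfl, rfl, rfl, rfl, rfl, rfl, rfl, rfl⟩
lemma eyv : ey c 0 = 0 ∧ ey c 1 = 0 ∧ ey c 2 = c ∧ ey c 3 = 0 ∧ ey c 4 = -c ∧
    ey c 5 = c ∧ ey c 6 = c ∧ ey c 7 = -c ∧ ey c 8 = -c :=
  ⟨rfl, rfl, rfl, rfl, rfl, rfl, rfl, rfl, rfl⟩
lemma barv : bar9 0 = 0 ∧ bar9 1 = 3 ∧ bar9 2 = 4 ∧ bar9 3 = 1 ∧ bar9 4 = 2 ∧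
    bar9 5 = 7 ∧ bar9 6 = 8 ∧ bar9 7 = 5 ∧ bar9 8 = 6 :=
  ⟨rfl, rfl, rfl, rfl, rfl, rfl, rfl, rfl, rfl⟩
lemma w9v : w9 0 = 4/9 ∧ w9 1 = 1/9 ∧ w9 2 = 1/9 ∧ w9 3 = 1/9 ∧ w9 4 = 1/9 ∧
    w9 5 = 1/36 ∧ w9 6 = 1/36 ∧ w9 7 = 1/36 ∧ w9 8 = 1/36 :=
  ⟨rfl, rfl, rfl, rfl, rfl, rfl, rfl, rfl, rfl⟩
lemma mk0 (h : 0 < 9) : (⟨0, h⟩ : Fin 9) = 0 := rfl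
lemma mk1 (h : 1 < 9) : (⟨1, h⟩ : Fin 9) = 1 := rfl
lemma mk2 (h : 2 < 9) : (⟨2, h⟩ : Fin 9) = 2 := rfl
lemma mk3 (h : 3 < 9) : (⟨3, h⟩ : Fin 9) = 3 := rfl
lemma mk4 (h : 4 < 9) : (⟨4, h⟩ : Fin 9) = 4 := rfl
lemma mk5 (h : 5 < 9) : (⟨5, h⟩ : Fin 9) = 5 := rfl
lemma mk6 (h : 6 < 9) : (⟨6, h⟩ : Fin 9) = 6 := rfl
lemma mk7 (h : 7 < 9) : (⟨7, h⟩ : Fin 9) = 7 := rfl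
lemma mk8 (h : 8 < 9) : (⟨8, h⟩ : Fin 9) = 8 := rfl
lemma mk20 (h : 0 < 2) : (⟨0, h⟩ : Fin 2) = 0 := rfl
lemma mk21 (h : 1 < 2) : (⟨1, h⟩ : Fin 2) = 1 := rfl
end auxEval

/-- On D2Q9 with `c_s² = c²/3`, the antisymmetric subspace `A` is
exactly spanned by `e_x, e_y, ψ^{(xxy)}, ψ^{(xyy)}`; these are pairwise orthogonal for
the weighted inner product, with `⟨e_α, e_α⟩_w = c_s²` (note `Σᵢ wᵢ = 1`) and
`⟨ψ, ψ⟩_w = 2 c_s⁶` for both third-order modes. -/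
theorem d2q9_antisymmetric_basis (c : ℝ) (hc : 0 < c) :
    Submodule.span ℝ (Set.range (antisymModes c)) = A9 ∧
    (∀ a b : Fin 4, a ≠ b → ∑ i, w9 i * antisymModes c a i * antisymModes c b i = 0) ∧
    (∑ i, w9 i = 1) ∧
    (∀ α : Fin 2, ∑ i, w9 i * ev c α i * ev c α i = cs2 c) ∧
    (∑ i, w9 i * psiXXY c i * psiXXY c i = 2 * (cs2 c) ^ 3) ∧
    (∑ i, w9 i * psiXYY c i * psiXYY c i = 2 * (cs2 c) ^ 3) := by

  have hc0 : c ≠ 0 := ne_of_gt hc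
  obtain ⟨X0, X1, X2, X3, X4, X5, X6, X7, X8⟩ := exv c
  obtain ⟨Y0, Y1, Y2, Y3, Y4, Y5, Y6, Y7, Y8⟩ := eyv c
  obtain ⟨B0, B1, B2, B3, B4, B5, B6, B7, B8⟩ := barv
  obtain ⟨W0, W1, W2, W3, W4, W5, W6, W7, W8⟩ := w9v
  refine ⟨?_, ?_, ?_, ?_, ?_, ?_⟩
  · apply le_antisymm
    · rw [Submodule.span_le]
      rintro x ⟨k, rfl⟩
      fin_cases k <;>
        · intro i
          fin_cases i <;>
            simp [antisymModes, psiXXY, psiXYY, cs2, Matrix.vecHead, Matrix.vecTail,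
              X0, X1, X2, X3, X4, X5, X6, X7, X8, Y0, Y1, Y2, Y3, Y4, Y5, Y6, Y7, Y8,
              B0, B1, B2, B3, B4, B5, B6, B7, B8]
    · intro f hf
      have h0 : f 0 = -f 0 := by have := hf 0; rwa [B0] at this
      have h0' : f 0 = 0 := by linarith
      have h1 : f 3 = -f 1 := by have := hf 1; rwa [B1] at this
      have h2 : f 4 = -f 2 := by have := hf 2; rwa [B2] at this
      have h5 : f 7 = -f 5 := by have := hf 5; rwa [B5] at this
      have h6 : f 8 = -f 6 := by have := hf 6; rwa [B6] at this
      set p : ℝ := (f 5 + f 6 - 2 * f 2) / (2 * c ^ 3) with hp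
      set q : ℝ := (f 5 - f 6 - 2 * f 1) / (2 * c ^ 3) with hq
      set a : ℝ := (f 1 + (c ^ 3 / 3) * q) / c with ha
      set b : ℝ := (f 2 + (c ^ 3 / 3) * p) / c with hb
      have hfe : f = a • ex c + b • ey c + p • psiXXY c + q • psiXYY c := by
        funext i
        fin_cases i <;>
          simp only [Pi.add_apply, Pi.smul_apply, smul_eq_mul, psiXXY, psiXYY, cs2,
            ha, hb, hp, hq, h0', h1, h2, h5, h6,
            mk0, mk1, mk2, mk3, mk4, mk5, mk6, mk7, mk8,
            X0, X1, X2, X3, X4, X5, X6, X7, X8, Y0, Y1, Y2, Y3, Y4, Y5, Y6, Y7, Y8] <;>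
          (try ring) <;> (try (field_simp; ring))
      rw [hfe]
      have m0 : ex c ∈ Set.range (antisymModes c) := ⟨0, rfl⟩
      have m1 : ey c ∈ Set.range (antisymModes c) := ⟨1, rfl⟩
      have m2 : psiXXY c ∈ Set.range (antisymModes c) := ⟨2, rfl⟩
      have m3 : psiXYY c ∈ Set.range (antisymModes c) := ⟨3, rfl⟩
      exact Submodule.add_mem _ (Submodule.add_mem _ (Submodule.add_mem _
        (Submodule.smul_mem _ _ (Submodule.subset_span m0))
        (Submodule.smul_mem _ _ (Submodule.subset_span m1)))
        (Submodule.smul_mem _ _ (Submodule.subset_span m2)))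
        (Submodule.smul_mem _ _ (Submodule.subset_span m3))
  · intro i j hij
    fin_cases i <;> fin_cases j <;> first
      | exact absurd rfl hij
      | (simp [Fin.sum_univ_succ, antisymModes, psiXXY, psiXYY, cs2, ex, ey, w9,
          Matrix.vecHead, Matrix.vecTail]; try ring)
  · norm_num [Fin.sum_univ_succ, w9]
  · intro α
    fin_cases α <;>
      · simp only [mk20, mk21, show ev c 0 = ex c from rfl, show ev c 1 = ey c from rfl]
        simp [Fin.sum_univ_succ, cs2, ex, ey, w9, Matrix.vecHead, Matrix.vecTail]
        try ring
  · simp [Fin.sum_univ_succ, psiXXY, cs2, ex, ey, w9, Matrix.vecHead, Matrix.vecTail]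
    try ring
  · simp [Fin.sum_univ_succ, psiXYY, cs2, ex, ey, w9, Matrix.vecHead, Matrix.vecTail]
    try ring
end

section
/- (Second-order equivalence on D2Q9.) Let f ∈ ℝ⁹ satisfy Σᵢ fᵢ = 0, and let f⁺ᵢ = (fᵢ + f_ī)/2 be its symmetric part. Define the Hermite stress moments A_{αβ} = Σᵢ H⁽²⁾ᵢ,αβ fᵢ. Then for every i, wᵢ (H⁽²⁾ᵢ,αβ A_{αβ})/(2c_s⁴) (Einstein summation over α,β ∈ {x,y}) equals f⁺ᵢ - (wᵢ φᵢ / (4c_s⁸)) Σⱼ φⱼ fⱼ, where φᵢ = (e_{ix}² - c_s²)(e_{iy}² - c_s²) is the ghost mode. -/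
open Finset

/-!
The inversion-even members of the orthogonal D2Q9 Hermite basis are `1`, `H⁽²⁾_xx`, `H⁽²⁾_xy`,
`H⁽²⁾_yy` and the ghost mode `φ`, orthogonal for the weights `wᵢ`, with weighted squared norms
`1`, `2 c_s⁴`, `c_s⁴`, `2 c_s⁴` and `4 c_s⁸` (the pair `xy`, `yx` both occurring in the double sum
accounts for the smaller norm of `H⁽²⁾_xy`). Hence the symmetric part `f⁺` is the sum of the
projections of `f` onto these five modes, and the projection onto `1` is `wᵢ Σⱼ fⱼ = 0`.
-/

theorem symm_kronecker_eq_even_mode_sum {c : ℝ} (hc : c ≠ 0) (i j : Fin 9) :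
    ((if i = j then 1 else 0) + (if bar9 i = j then 1 else 0)) / 2 =
      w9 i * (1 + (∑ α, ∑ β, H2 c α β i * H2 c α β j) / (2 * cs2 c ^ 2) +
        ghost c i * ghost c j / (4 * cs2 c ^ 4)) := by
  fin_cases i <;> fin_cases j <;>
  · simp only [Fin.sum_univ_two, H2, ghost, ev, ex, ey, w9, bar9, cs2, Fin.reduceFinMk, Fin.isValue,
      Matrix.cons_val, Matrix.cons_val_zero, Matrix.cons_val_one, Fin.reduceEq, if_true, if_false]
    field_simp
    ring

theorem symm_part_eq_even_mode_sum {c : ℝ} (hc : c ≠ 0) (f : Fin 9 → ℝ) (i : Fin 9) :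
    (f i + f (bar9 i)) / 2 =
      w9 i * ∑ j, f j +
        w9 i * (∑ α, ∑ β, H2 c α β i * ∑ j, H2 c α β j * f j) / (2 * cs2 c ^ 2) +
        w9 i * ghost c i / (4 * cs2 c ^ 4) * ∑ j, ghost c j * f j := by
  have hδ : (f i + f (bar9 i)) / 2 =
      ∑ j, ((if i = j then 1 else 0) + (if bar9 i = j then 1 else 0)) / 2 * f j := by
    simp only [add_div, add_mul, sum_add_distrib, ite_div, ite_mul, zero_div, zero_mul,
      sum_ite_eq, mem_univ, if_true]
    ring
  simp only [hδ, symm_kronecker_eq_even_mode_sum hc, Fin.sum_univ_succ, Fin.sum_univ_zero]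
  ring

/-- **Second-order equivalence on D2Q9.** For `f` with `Σᵢ fᵢ = 0`, the
second-order Hermite projection equals the symmetric part of `f` minus the ghost-mode
contribution. -/
theorem d2q9_second_order_equivalence (c : ℝ) (hc : 0 < c) (f : Fin 9 → ℝ)
    (hmass : ∑ i, f i = 0) :
    ∀ i : Fin 9,
      w9 i * (∑ α : Fin 2, ∑ β : Fin 2, H2 c α β i * (∑ j, H2 c α β j * f j)) /
          (2 * (cs2 c) ^ 2)
        = (f i + f (bar9 i)) / 2 -
            w9 i * ghost c i / (4 * (cs2 c) ^ 4) * (∑ j, ghost c j * f j) := by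
  intro i
  rw [symm_part_eq_even_mode_sum hc.ne' f i, hmass]
  ring
end

section
/- (Third-order equivalence on D2Q9.) Let f ∈ ℝ⁹ satisfy the momentum constraints Σᵢ e_{ix} fᵢ = 0 and Σᵢ e_{iy} fᵢ = 0, and let f⁻ᵢ = (fᵢ - f_ī)/2 be its antisymmetric part. Define A_{αβγ} = Σᵢ H⁽³⁾ᵢ,αβγ fᵢ. Then for every i, wᵢ (H⁽³⁾ᵢ,αβγ A_{αβγ})/(6c_s⁶) (summation over all ordered triples α,β,γ ∈ {x,y}) equals f⁻ᵢ. -/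
open Finset

/-!
Every D2Q9 velocity component lies in `{0, ±c}`, so `e³ = c² e`; with `3 c_s² = c²` the pure modes
`H⁽³⁾_xxx`, `H⁽³⁾_yyy` vanish, and by symmetry of `H⁽³⁾` only the mixed modes `(e_x² - c_s²) e_y` and
`(e_y² - c_s²) e_x` survive in the third-order projection. Together with `e_x`, `e_y` they span the
antisymmetric subspace and are orthogonal for the weights `wᵢ`, so the first- plus third-order Hermite
projections of any `f` add up to its antisymmetric part. The momentum constraints kill the first-order
projection.
-/

theorem ev_pow_three (c : ℝ) (α : Fin 2) (i : Fin 9) : ev c α i ^ 3 = c ^ 2 * ev c α i := by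
  fin_cases α <;> fin_cases i <;>
    simp only [ev, ex, ey, Matrix.cons_val, Matrix.cons_val_zero, Matrix.cons_val_one, Fin.isValue,
      Fin.reduceFinMk, Fin.zero_eta, Fin.mk_one] <;>
    ring

theorem H3_diag (c : ℝ) (α : Fin 2) : H3 c α α α = 0 := by
  funext i
  simp only [H3, cs2, if_true, Pi.zero_apply]
  linear_combination ev_pow_three c α i

theorem H3_swap_left (c : ℝ) (α β γ : Fin 2) : H3 c α β γ = H3 c β α γ := by
  funext i; simp only [H3, eq_comm]; ring

theorem H3_swap_right (c : ℝ) (α β γ : Fin 2) : H3 c α β γ = H3 c α γ β := by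
  funext i; simp only [H3, eq_comm]; ring

theorem Fin.sum_two_cube_of_symm {M : Type*} [AddCommMonoid M] (g : Fin 2 → Fin 2 → Fin 2 → M)
    (h12 : ∀ a b c, g a b c = g b a c) (h23 : ∀ a b c, g a b c = g a c b) :
    ∑ a, ∑ b, ∑ c, g a b c = g 0 0 0 + g 1 1 1 + 3 • g 0 0 1 + 3 • g 0 1 1 := by
  have e010 : g 0 1 0 = g 0 0 1 := h23 0 1 0
  have e100 : g 1 0 0 = g 0 0 1 := (h12 1 0 0).trans e010
  have e101 : g 1 0 1 = g 0 1 1 := h12 1 0 1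
  have e110 : g 1 1 0 = g 0 1 1 := (h23 1 1 0).trans e101
  simp only [Fin.sum_univ_two, e010, e100, e101, e110]
  abel

/-- The order-`n` Hermite projection is `wᵢ H⁽ⁿ⁾ᵢ : a⁽ⁿ⁾ / (n! c_s²ⁿ)` with `a⁽ⁿ⁾ = ∑ⱼ H⁽ⁿ⁾ⱼ fⱼ`;
here `n = 1`, where `H⁽¹⁾ = e`. -/
noncomputable def hermiteProj1 (c : ℝ) (f : Fin 9 → ℝ) (i : Fin 9) : ℝ :=
  w9 i * (∑ α : Fin 2, ev c α i * (∑ j, ev c α j * f j)) / cs2 c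

noncomputable def hermiteProj3 (c : ℝ) (f : Fin 9 → ℝ) (i : Fin 9) : ℝ :=
  w9 i * (∑ α : Fin 2, ∑ β : Fin 2, ∑ γ : Fin 2,
      H3 c α β γ i * (∑ j, H3 c α β γ j * f j)) / (6 * (cs2 c) ^ 3)

theorem hermiteProj3_eq (c : ℝ) (f : Fin 9 → ℝ) (i : Fin 9) :
    hermiteProj3 c f i = w9 i * (H3 c 0 0 1 i * (∑ j, H3 c 0 0 1 j * f j) +
      H3 c 0 1 1 i * (∑ j, H3 c 0 1 1 j * f j)) / (2 * cs2 c ^ 3) := by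
  rw [hermiteProj3, Fin.sum_two_cube_of_symm (fun α β γ ↦ H3 c α β γ i * ∑ j, H3 c α β γ j * f j)
    (fun α β γ ↦ by rw [H3_swap_left]) (fun α β γ ↦ by rw [H3_swap_right])]
  simp only [H3_diag, Pi.zero_apply, zero_mul, zero_add, nsmul_eq_mul, Nat.cast_ofNat]
  ring

theorem hermiteProj1_add_hermiteProj3 {c : ℝ} (hc : c ≠ 0) (f : Fin 9 → ℝ) (i : Fin 9) :
    hermiteProj1 c f i + hermiteProj3 c f i = (f i - f (bar9 i)) / 2 := by
  rw [hermiteProj3_eq]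
  fin_cases i <;>
    simp only [hermiteProj1, H3, ev, ex, ey, cs2, w9, bar9, Fin.sum_univ_succ, Fin.sum_univ_zero,
      Matrix.cons_val, Matrix.cons_val_zero, Matrix.cons_val_one, Matrix.cons_val_succ, Fin.isValue,
      Fin.succ_zero_eq_one, Fin.succ_one_eq_two, Fin.reduceSucc, Fin.reduceFinMk, Fin.zero_eta,
      Fin.mk_one, zero_ne_one, one_ne_zero, ↓reduceIte] <;>
    field_simp <;> ring

theorem hermiteProj1_eq_zero {c : ℝ} {f : Fin 9 → ℝ}
    (hmom : ∀ α : Fin 2, ∑ i, ev c α i * f i = 0) : hermiteProj1 c f = 0 := by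
  funext i
  simp [hermiteProj1, hmom]

/-- **Third-order equivalence on D2Q9.** For `f` satisfying the momentum
constraints, the third-order Hermite projection equals the antisymmetric part of `f`. -/
theorem d2q9_third_order_equivalence (c : ℝ) (hc : 0 < c) (f : Fin 9 → ℝ)
    (hmom : ∀ α : Fin 2, ∑ i, ev c α i * f i = 0) :
    ∀ i : Fin 9,
      w9 i * (∑ α : Fin 2, ∑ β : Fin 2, ∑ γ : Fin 2,
          H3 c α β γ i * (∑ j, H3 c α β γ j * f j)) / (6 * (cs2 c) ^ 3)
        = (f i - f (bar9 i)) / 2 := by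
  intro i
  have h := hermiteProj1_add_hermiteProj3 hc.ne' f i
  rwa [hermiteProj1_eq_zero hmom, Pi.zero_apply, zero_add] at h
end
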